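/- For the functions C_{2k}, C_{2k+1} of Theorem 2.2: the series C_{2k}(s,x;σ²) converges absolutely for every s ≥ 0, x ∈ ℝ, σ² > 0, and k ∈ ℕ_0. Specifically, the series Σ_{ℓ=k}^∞ (ℓ!/(2ℓ+1)!) r^{(2ℓ+1)/2} H_{2ℓ+1}(u) converges absolutely for every 0 < r < 1 and u ∈ ℝ, where H_n is the Hermite polynomial of degree n. -/

import Mathlib

open Real Finset

/-- The physicists' Hermite polynomial
`H_n(x) = n! Σ_{k=0}^{[n/2]} (-1)^k (2x)^{n-2k} / (k!(n-2k)!)`. -/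
noncomputable def hermiteH (n : ℕ) (x : ℝ) : ℝ :=
  (n.factorial : ℝ) *
    ∑ k ∈ Finset.range (n / 2 + 1),
      (-1 : ℝ) ^ k * (2 * x) ^ (n - 2 * k) /
        ((k.factorial : ℝ) * ((n - 2 * k).factorial : ℝ))

/-!
Expanding `H_{2ℓ+1}` and reindexing, `(ℓ!/(2ℓ+1)!) |H_{2ℓ+1}(u)|` is at most
`Σ_{j ≤ ℓ} ℓ^j a^{2j+1} / (j!)²` with `a = |2u|`. For any `t > 0`, `ℓ^j / j! ≤ e^{tℓ} / t^j`,
so this is at most `a e^{a²/t} e^{tℓ}`: the Hermite factor grows subexponentially in `ℓ`.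
Choosing `t` with `e^t r < 1`, the series is dominated by a geometric one.
-/

section

open Nat

lemma abs_hermiteH_le (n : ℕ) (x : ℝ) :
    |hermiteH n x| ≤
      n ! * ∑ k ∈ range (n / 2 + 1), |2 * x| ^ (n - 2 * k) / (k ! * (n - 2 * k)!) := by
  rw [hermiteH, abs_mul, Nat.abs_cast]
  gcongr
  refine (abs_sum_le_sum_abs _ _).trans_eq (sum_congr rfl fun k _ => ?_)
  simp [abs_div, abs_mul, abs_pow]

lemma factorial_div_mul_abs_hermiteH_odd_le_sum (ℓ : ℕ) (x : ℝ) :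
    ℓ ! / (2 * ℓ + 1)! * |hermiteH (2 * ℓ + 1) x| ≤
      ∑ j ∈ range (ℓ + 1), ℓ.descFactorial j * |2 * x| ^ (2 * j + 1) / (2 * j + 1)! := by
  have hdiv : (2 * ℓ + 1) / 2 = ℓ := by omega
  calc ℓ ! / (2 * ℓ + 1)! * |hermiteH (2 * ℓ + 1) x|
      ≤ ℓ ! / (2 * ℓ + 1)! * ((2 * ℓ + 1)! * ∑ k ∈ range (ℓ + 1),
          |2 * x| ^ (2 * ℓ + 1 - 2 * k) / (k ! * (2 * ℓ + 1 - 2 * k)!)) := by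
        have h := abs_hermiteH_le (2 * ℓ + 1) x
        rw [hdiv] at h
        gcongr
    _ = ∑ k ∈ range (ℓ + 1),
          ℓ ! * |2 * x| ^ (2 * ℓ + 1 - 2 * k) / (k ! * (2 * ℓ + 1 - 2 * k)!) := by
        rw [← mul_assoc, div_mul_cancel₀ _ (by positivity), mul_sum]
        simp only [mul_div_assoc]
    _ = _ := by
        rw [← sum_range_reflect]
        refine sum_congr rfl fun j hj => ?_
        have hjℓ : j ≤ ℓ := Nat.lt_succ_iff.mp (mem_range.mp hj)
        rw [show ℓ + 1 - 1 - j = ℓ - j by omega, show 2 * ℓ + 1 - 2 * (ℓ - j) = 2 * j + 1 by omega,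
          ← Nat.factorial_mul_descFactorial hjℓ]
        push_cast
        field_simp

lemma descFactorial_div_factorial_two_mul_add_one_le (ℓ j : ℕ) {t : ℝ} (ht : 0 < t) :
    (ℓ.descFactorial j : ℝ) / (2 * j + 1)! ≤ exp t ^ ℓ / t ^ j / j ! := by
  have hsq : (j ! * j ! : ℝ) ≤ (2 * j + 1)! := by
    have := Nat.factorial_mul_factorial_dvd_factorial_add j j
    exact_mod_cast (Nat.le_of_dvd (factorial_pos _) this).trans (factorial_le (by omega))
  have hpow : (ℓ : ℝ) ^ j / j ! ≤ exp t ^ ℓ / t ^ j := by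
    rw [le_div_iff₀ (by positivity), ← exp_nat_mul, div_mul_eq_mul_div, ← mul_pow,
      mul_comm (ℓ : ℝ)]
    exact pow_div_factorial_le_exp _ (by positivity) j
  calc (ℓ.descFactorial j : ℝ) / (2 * j + 1)! ≤ ℓ ^ j / (j ! * j !) := by
        gcongr
        exact_mod_cast descFactorial_le_pow ℓ j
    _ ≤ exp t ^ ℓ / t ^ j / j ! := by
        rw [← div_div]; gcongr

lemma factorial_div_mul_abs_hermiteH_odd_le_exp (ℓ : ℕ) (x : ℝ) {t : ℝ} (ht : 0 < t) :
    ℓ ! / (2 * ℓ + 1)! * |hermiteH (2 * ℓ + 1) x| ≤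
      |2 * x| * exp (|2 * x| ^ 2 / t) * exp t ^ ℓ := by
  set a := |2 * x|
  calc ℓ ! / (2 * ℓ + 1)! * |hermiteH (2 * ℓ + 1) x|
      ≤ ∑ j ∈ range (ℓ + 1), ℓ.descFactorial j * a ^ (2 * j + 1) / (2 * j + 1)! :=
        factorial_div_mul_abs_hermiteH_odd_le_sum ℓ x
    _ ≤ ∑ j ∈ range (ℓ + 1), a * exp t ^ ℓ * ((a ^ 2 / t) ^ j / j !) := by
        gcongr with j
        calc (ℓ.descFactorial j : ℝ) * a ^ (2 * j + 1) / (2 * j + 1)!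
            = a * (a ^ 2) ^ j * (ℓ.descFactorial j / (2 * j + 1)!) := by ring
          _ ≤ a * (a ^ 2) ^ j * (exp t ^ ℓ / t ^ j / j !) :=
            mul_le_mul_of_nonneg_left (descFactorial_div_factorial_two_mul_add_one_le ℓ j ht)
              (by positivity)
          _ = _ := by ring
    _ ≤ a * exp t ^ ℓ * exp (a ^ 2 / t) := by
        rw [← mul_sum]; gcongr; exact sum_le_exp_of_nonneg (by positivity) _
    _ = _ := by ring

end

lemma rpow_two_mul_add_one_div_two {r : ℝ} (hr : 0 < r) (ℓ : ℕ) :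
    r ^ (((2 * ℓ + 1 : ℕ) : ℝ) / 2) = √r * r ^ ℓ := by
  rw [sqrt_eq_rpow, ← rpow_natCast, ← rpow_add hr]
  congr 1
  push_cast
  ring

/-- Absolute convergence of the series appearing in `C_{2k}`:
`Σ_{ℓ ≥ k} (ℓ!/(2ℓ+1)!) r^{(2ℓ+1)/2} H_{2ℓ+1}(u)` converges absolutely
for every `0 < r < 1` and `u ∈ ℝ`. -/
theorem hermite_series_abs_convergence (r u : ℝ) (hr0 : 0 < r) (hr1 : r < 1) :
    Summable (fun ℓ : ℕ =>
      |((ℓ.factorial : ℝ) / ((2 * ℓ + 1).factorial : ℝ)) *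
        r ^ (((2 * ℓ + 1 : ℕ) : ℝ) / 2) * hermiteH (2 * ℓ + 1) u|) := by
  obtain ⟨ρ, hrρ, hρ1⟩ := exists_between hr1
  set t := log (ρ / r)
  have ht : 0 < t := log_pos ((one_lt_div hr0).2 hrρ)
  have hexp : exp t * r = ρ := by
    rw [exp_log (div_pos (hr0.trans hrρ) hr0), div_mul_cancel₀ _ hr0.ne']
  set a := |2 * u|
  refine Summable.of_nonneg_of_le (fun ℓ => abs_nonneg _) (fun ℓ => ?_)
    ((summable_geometric_of_lt_one (hr0.trans hrρ).le hρ1).mul_left (√r * a * exp (a ^ 2 / t)))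
  have hH := factorial_div_mul_abs_hermiteH_odd_le_exp ℓ u ht
  calc _ = ℓ.factorial / (2 * ℓ + 1).factorial * |hermiteH (2 * ℓ + 1) u| * (√r * r ^ ℓ) := by
        rw [rpow_two_mul_add_one_div_two hr0, abs_mul, abs_mul, abs_of_nonneg (by positivity),
          abs_of_nonneg (by positivity)]
        ring
    _ ≤ a * exp (a ^ 2 / t) * exp t ^ ℓ * (√r * r ^ ℓ) := by gcongr
    _ = √r * a * exp (a ^ 2 / t) * ρ ^ ℓ := by rw [← hexp, mul_pow]; ring
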